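/- For α > -1, n ≥ 1, and x ∈ [0,1), B_n^{α,-1}(e_2; x) = (nx+α+1)(nx+α+2)/((n+α+1)(n+α+2)) > x². Consequently lim_{m→∞}(B_n^{α,-1})^m f(x) = f(1) uniformly on [0,1] for each f ∈ C[0,1]. -/

import Mathlib

open MeasureTheory intervalIntegral Filter

/-- The Beta operator with Jacobi weights: `B_n^{α,β}(f;x)`. -/
noncomputable def Bop (n α β : ℝ) (f : ℝ → ℝ) (x : ℝ) : ℝ :=
  (∫ t in (0:ℝ)..1, t ^ (n * x + α) * (1 - t) ^ (n - n * x + β) * f t) /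
  (∫ t in (0:ℝ)..1, t ^ (n * x + α) * (1 - t) ^ (n - n * x + β))

/-- The `m`-th central moment `T_{n,m}^{α,β}(x)`. -/
noncomputable def T (n α β : ℝ) (m : ℕ) (x : ℝ) : ℝ :=
  Bop n α β (fun t => (t - x) ^ m) x


/-- The Beta operator extended to the limiting cases `α = -1` (interpolation at `0`)
and `β = -1` (interpolation at `1`). -/
noncomputable def BopE (n α β : ℝ) (f : ℝ → ℝ) (x : ℝ) : ℝ :=
  if α = -1 ∧ x = 0 then f 0
  else if β = -1 ∧ x = 1 then f 1
  else Bop n α β f x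

/-- The `m`-th central moment of the extended Beta operator. -/
noncomputable def TE (n α β : ℝ) (m : ℕ) (x : ℝ) : ℝ :=
  BopE n α β (fun t => (t - x) ^ m) x


/-! For `x < 1` the operator averages `f` against the Beta density with parameters
`(n x + α + 1, n - n x)`, so its moments are ratios of Beta functions; in particular it maps
`1 - t` to `(n / (n + α + 1)) (1 - x)`. A function continuous on `[0, 1]` satisfies
`|f t - f 1| ≤ ε + K (1 - t)` there, and positivity of the operator carries this bound through
the `m`-th iterate with `K` replaced by `K (n / (n + α + 1)) ^ m`, which tends to `0`. -/

open Set Real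

section BetaWeight

variable {p q : ℝ}

lemma ofReal_rpow_mul_one_sub_rpow {t : ℝ} (ht : t ∈ Icc (0:ℝ) 1) :
    ((t ^ p * (1 - t) ^ q : ℝ) : ℂ)
      = (t : ℂ) ^ ((p + 1 : ℝ) - 1 : ℂ) * (1 - (t : ℂ)) ^ ((q + 1 : ℝ) - 1 : ℂ) := by
  push_cast
  rw [add_sub_cancel_right, add_sub_cancel_right, Complex.ofReal_cpow ht.1,
    Complex.ofReal_cpow (sub_nonneg.2 ht.2)]
  push_cast; ring

lemma intervalIntegrable_rpow_mul_one_sub_rpow (hp : -1 < p) (hq : -1 < q) :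
    IntervalIntegrable (fun t : ℝ => t ^ p * (1 - t) ^ q) volume 0 1 := by
  have h := Complex.betaIntegral_convergent (u := (p + 1 : ℝ)) (v := (q + 1 : ℝ))
    (by simp; linarith) (by simp; linarith)
  rw [intervalIntegrable_iff] at h ⊢
  refine IntegrableOn.congr_fun h.re (fun t ht => ?_) measurableSet_uIoc
  rw [uIoc_of_le zero_le_one] at ht
  rw [← ofReal_rpow_mul_one_sub_rpow ⟨ht.1.le, ht.2⟩, RCLike.re_to_complex, Complex.ofReal_re]

lemma integral_rpow_mul_one_sub_rpow (hp : -1 < p) (hq : -1 < q) :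
    ∫ t in (0:ℝ)..1, t ^ p * (1 - t) ^ q = ProbabilityTheory.beta (p + 1) (q + 1) := by
  rw [ProbabilityTheory.beta_eq_betaIntegralReal _ _ (by linarith) (by linarith),
    Complex.betaIntegral, ← Complex.ofReal_re (∫ t in (0:ℝ)..1, t ^ p * (1 - t) ^ q),
    ← intervalIntegral.integral_ofReal]
  congr 1
  refine intervalIntegral.integral_congr fun t ht => ?_
  rw [uIcc_of_le zero_le_one] at ht
  exact ofReal_rpow_mul_one_sub_rpow ht

end BetaWeight

namespace ProbabilityTheory

lemma beta_add_one_left {a b : ℝ} (ha : 0 < a) (hb : 0 < b) :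
    beta (a + 1) b = a / (a + b) * beta a b := by
  have hab : Gamma (a + b) ≠ 0 := (Gamma_pos_of_pos (add_pos ha hb)).ne'
  rw [beta, beta, add_right_comm, Gamma_add_one ha.ne', Gamma_add_one (add_pos ha hb).ne']
  field_simp

lemma beta_add_one_right {a b : ℝ} (ha : 0 < a) (hb : 0 < b) :
    beta a (b + 1) = b / (a + b) * beta a b := by
  have hab : Gamma (a + b) ≠ 0 := (Gamma_pos_of_pos (add_pos ha hb)).ne'
  rw [beta, beta, ← add_assoc, Gamma_add_one hb.ne', Gamma_add_one (add_pos ha hb).ne']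
  field_simp

end ProbabilityTheory

section BetaMoments

open ProbabilityTheory

variable {p q : ℝ}

lemma integral_rpow_mul_one_sub_rpow_mul_one_sub (hp : -1 < p) (hq : -1 < q) :
    ∫ t in (0:ℝ)..1, t ^ p * (1 - t) ^ q * (1 - t)
      = (q + 1) / (p + q + 2) * ∫ t in (0:ℝ)..1, t ^ p * (1 - t) ^ q := by
  have hshift : ∀ t ∈ uIcc (0:ℝ) 1,
      t ^ p * (1 - t) ^ q * (1 - t) = t ^ p * (1 - t) ^ (q + 1) := by
    intro t ht
    rw [uIcc_of_le zero_le_one] at ht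
    rw [rpow_add_one' (sub_nonneg.2 ht.2) (by linarith), mul_assoc]
  rw [intervalIntegral.integral_congr hshift, integral_rpow_mul_one_sub_rpow hp (by linarith),
    integral_rpow_mul_one_sub_rpow hp hq, beta_add_one_right (by linarith) (by linarith)]
  ring_nf

lemma integral_rpow_mul_one_sub_rpow_mul_sq (hp : -1 < p) (hq : -1 < q) :
    ∫ t in (0:ℝ)..1, t ^ p * (1 - t) ^ q * t ^ 2
      = (p + 1) * (p + 2) / ((p + q + 2) * (p + q + 3))
          * ∫ t in (0:ℝ)..1, t ^ p * (1 - t) ^ q := by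
  have hshift : ∀ t ∈ uIcc (0:ℝ) 1,
      t ^ p * (1 - t) ^ q * t ^ 2 = t ^ (p + 1 + 1) * (1 - t) ^ q := by
    intro t ht
    rw [uIcc_of_le zero_le_one] at ht
    rw [rpow_add_one' ht.1 (by linarith), rpow_add_one' ht.1 (by linarith)]
    ring
  rw [intervalIntegral.integral_congr hshift, integral_rpow_mul_one_sub_rpow (by linarith) hq,
    integral_rpow_mul_one_sub_rpow hp hq, beta_add_one_left (by linarith) (by linarith),
    beta_add_one_left (by linarith) (by linarith)]
  rw [show p + 1 + 1 + (q + 1) = p + q + 3 by ring, show p + 1 + (q + 1) = p + q + 2 by ring,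
    ← mul_assoc, div_mul_div_comm]
  ring

end BetaMoments

noncomputable def betaAverage (p q : ℝ) (f : ℝ → ℝ) : ℝ :=
  (∫ t in (0:ℝ)..1, t ^ p * (1 - t) ^ q * f t) / ∫ t in (0:ℝ)..1, t ^ p * (1 - t) ^ q

section BetaAverage

variable {p q : ℝ}

lemma integral_rpow_mul_one_sub_rpow_pos (hp : -1 < p) (hq : -1 < q) :
    0 < ∫ t in (0:ℝ)..1, t ^ p * (1 - t) ^ q := by
  rw [integral_rpow_mul_one_sub_rpow hp hq]
  exact ProbabilityTheory.beta_pos (by linarith) (by linarith)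

lemma betaAverage_sq (hp : -1 < p) (hq : -1 < q) :
    betaAverage p q (fun t => t ^ 2) = (p + 1) * (p + 2) / ((p + q + 2) * (p + q + 3)) := by
  rw [betaAverage, integral_rpow_mul_one_sub_rpow_mul_sq hp hq,
    mul_div_cancel_right₀ _ (integral_rpow_mul_one_sub_rpow_pos hp hq).ne']

lemma rpow_mul_one_sub_rpow_nonneg {t : ℝ} (ht : t ∈ Icc (0:ℝ) 1) :
    0 ≤ t ^ p * (1 - t) ^ q :=
  mul_nonneg (rpow_nonneg ht.1 p) (rpow_nonneg (sub_nonneg.2 ht.2) q)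

variable {h : ℝ → ℝ} {a b c : ℝ}

lemma intervalIntegrable_rpow_mul_one_sub_rpow_mul
    (hp : -1 < p) (hq : -1 < q) (hh : AEStronglyMeasurable h (volume.restrict (Ioc 0 1)))
    (hbd : ∀ t ∈ Ioc (0:ℝ) 1, |h t - c| ≤ a + b * (1 - t)) :
    IntervalIntegrable (fun t => t ^ p * (1 - t) ^ q * h t) volume 0 1 := by
  have hw := intervalIntegrable_rpow_mul_one_sub_rpow hp hq
  refine (hw.mul_continuousOn (g := fun t => |c| + a + b * (1 - t)) (by fun_prop)).mono_fun'
    ?_ ?_ <;> rw [uIoc_of_le zero_le_one]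
  · exact hw.aestronglyMeasurable.mul hh
  · refine (ae_restrict_iff' measurableSet_Ioc).2 (ae_of_all _ fun t ht => ?_)
    have hw0 := rpow_mul_one_sub_rpow_nonneg (p := p) (q := q) (Ioc_subset_Icc_self ht)
    simp only [Real.norm_eq_abs, abs_mul, abs_of_nonneg hw0]
    refine mul_le_mul_of_nonneg_left ?_ hw0
    linarith [abs_sub_abs_le_abs_sub (h t) c, hbd t ht]

lemma abs_betaAverage_sub_le
    (hp : -1 < p) (hq : -1 < q) (hh : AEStronglyMeasurable h (volume.restrict (Ioc 0 1)))
    (hbd : ∀ t ∈ Ioc (0:ℝ) 1, |h t - c| ≤ a + b * (1 - t)) :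
    |betaAverage p q h - c| ≤ a + b * ((q + 1) / (p + q + 2)) := by
  set W := ∫ t in (0:ℝ)..1, t ^ p * (1 - t) ^ q
  have hW : 0 < W := integral_rpow_mul_one_sub_rpow_pos hp hq
  have hw := intervalIntegrable_rpow_mul_one_sub_rpow hp hq
  have hwh := intervalIntegrable_rpow_mul_one_sub_rpow_mul hp hq hh hbd
  have hwhc : IntervalIntegrable (fun t => t ^ p * (1 - t) ^ q * (h t - c)) volume 0 1 :=
    intervalIntegrable_rpow_mul_one_sub_rpow_mul hp hq (hh.sub aestronglyMeasurable_const)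
      (c := 0) (by simpa using hbd)
  have hmaj : IntervalIntegrable (fun t => t ^ p * (1 - t) ^ q * (a + b * (1 - t))) volume 0 1 :=
    hw.mul_continuousOn (by fun_prop)
  have hcenter :
      betaAverage p q h - c = (∫ t in (0:ℝ)..1, t ^ p * (1 - t) ^ q * (h t - c)) / W := by
    simp_rw [mul_sub]
    rw [intervalIntegral.integral_sub hwh (hw.mul_const c), intervalIntegral.integral_mul_const,
      sub_div, mul_div_cancel_left₀ _ hW.ne', betaAverage]
  have hmaj_eq : ∫ t in (0:ℝ)..1, t ^ p * (1 - t) ^ q * (a + b * (1 - t))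
      = (a + b * ((q + 1) / (p + q + 2))) * W := by
    have hw1 : IntervalIntegrable (fun t => t ^ p * (1 - t) ^ q * (1 - t)) volume 0 1 :=
      hw.mul_continuousOn (by fun_prop)
    simp_rw [mul_add, ← mul_assoc _ b, mul_right_comm _ b]
    rw [intervalIntegral.integral_add (hw.mul_const a) (hw1.mul_const b),
      intervalIntegral.integral_mul_const, intervalIntegral.integral_mul_const,
      integral_rpow_mul_one_sub_rpow_mul_one_sub hp hq]
    ring
  calc |betaAverage p q h - c|
      = |∫ t in (0:ℝ)..1, t ^ p * (1 - t) ^ q * (h t - c)| / W := by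
        rw [hcenter, abs_div, abs_of_pos hW]
    _ ≤ (∫ t in (0:ℝ)..1, t ^ p * (1 - t) ^ q * (a + b * (1 - t))) / W := by
        refine div_le_div_of_nonneg_right ((abs_integral_le_integral_abs zero_le_one).trans
          (integral_mono_on_of_le_Ioo zero_le_one hwhc.abs hmaj fun t ht => ?_)) hW.le
        have hw0 := rpow_mul_one_sub_rpow_nonneg (p := p) (q := q) (Ioo_subset_Icc_self ht)
        rw [abs_mul, abs_of_nonneg hw0]
        exact mul_le_mul_of_nonneg_left (hbd t (Ioo_subset_Ioc_self ht)) hw0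
    _ = a + b * ((q + 1) / (p + q + 2)) := by
        rw [hmaj_eq, mul_div_cancel_right₀ _ hW.ne']

end BetaAverage

section BetaOperator

variable {n α β x : ℝ} {f : ℝ → ℝ}

lemma Bop_eq_betaAverage : Bop n α β f x = betaAverage (n * x + α) (n - n * x + β) f := rfl

lemma BopE_one : BopE n α (-1) f 1 = f 1 := by
  simp [BopE]

lemma BopE_of_ne_one (hα : α ≠ -1) (hx : x ≠ 1) : BopE n α β f x = Bop n α β f x := by
  simp [BopE, hα, hx]

lemma BopE_ae_eq_Bop (μ : Measure ℝ) [NullSingletonClass μ] :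
    BopE n α β f =ᵐ[μ] Bop n α β f := by
  filter_upwards [Measure.ae_ne μ 0, Measure.ae_ne μ 1] with x hx0 hx1
  simp [BopE, hx0, hx1]

lemma aestronglyMeasurable_Bop (μ : Measure ℝ) [SFinite μ]
    (hf : AEStronglyMeasurable f (volume.restrict (Ioc 0 1))) :
    AEStronglyMeasurable (Bop n α β f) μ := by
  have hw : Measurable fun z : ℝ × ℝ =>
      z.2 ^ (n * z.1 + α) * (1 - z.2) ^ (n - n * z.1 + β) := by
    fun_prop
  have hnum := (hw.aestronglyMeasurable.mul (hf.comp_snd (μ := μ))).integral_prod_right'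
  have hden :=
    (hw.aestronglyMeasurable (μ := μ.prod (volume.restrict (Ioc 0 1)))).integral_prod_right'
  unfold Bop
  simp only [intervalIntegral.integral_of_le zero_le_one]
  exact (hnum.aemeasurable.div hden.aemeasurable).aestronglyMeasurable

end BetaOperator

section Iterates

variable {n α a b c : ℝ} {g : ℝ → ℝ}

lemma aestronglyMeasurable_iterate_BopE (β : ℝ)
    (hg : AEStronglyMeasurable g (volume.restrict (Ioc 0 1))) (m : ℕ) :
    AEStronglyMeasurable ((BopE n α β)^[m] g) (volume.restrict (Ioc 0 1)) := by
  induction m with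
  | zero => exact hg
  | succ m ih =>
    rw [Function.iterate_succ']
    exact (aestronglyMeasurable_Bop _ ih).congr (BopE_ae_eq_Bop _).symm

lemma abs_BopE_sub_le (hα : -1 < α) (hn : 0 < n)
    (hg : AEStronglyMeasurable g (volume.restrict (Ioc 0 1)))
    (hbd : ∀ t ∈ Icc (0:ℝ) 1, |g t - c| ≤ a + b * (1 - t))
    {x : ℝ} (hx : x ∈ Icc (0:ℝ) 1) :
    |BopE n α (-1) g x - c| ≤ a + b * (n / (n + α + 1)) * (1 - x) := by
  rcases hx.2.eq_or_lt with rfl | hx1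
  · simpa [BopE_one] using hbd 1 hx
  have hxn : 0 < n - n * x := by nlinarith
  rw [BopE_of_ne_one (by linarith) hx1.ne, Bop_eq_betaAverage]
  convert abs_betaAverage_sub_le (p := n * x + α) (q := n - n * x + -1)
    (by nlinarith [hx.1]) (by linarith) hg
    (fun t ht => hbd t (Ioc_subset_Icc_self ht)) using 2
  field_simp
  ring

lemma abs_iterate_BopE_sub_le (hα : -1 < α) (hn : 0 < n)
    (hg : AEStronglyMeasurable g (volume.restrict (Ioc 0 1)))
    (hbd : ∀ t ∈ Icc (0:ℝ) 1, |g t - c| ≤ a + b * (1 - t)) (m : ℕ) :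
    ∀ x ∈ Icc (0:ℝ) 1,
      |(BopE n α (-1))^[m] g x - c| ≤ a + b * (n / (n + α + 1)) ^ m * (1 - x) := by
  induction m with
  | zero => simpa using hbd
  | succ m ih =>
    intro x hx
    rw [Function.iterate_succ_apply', pow_succ, ← mul_assoc]
    exact abs_BopE_sub_le hα hn (aestronglyMeasurable_iterate_BopE _ hg m) ih hx

end Iterates

lemma exists_dist_le_add_mul_dist {X Y : Type*} [PseudoMetricSpace X] [PseudoMetricSpace Y]
    {f : X → Y} {s : Set X} {x₀ : X} (hs : IsCompact s) (hf : ContinuousOn f s)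
    (hx₀ : x₀ ∈ s) {ε : ℝ} (hε : 0 < ε) :
    ∃ K, 0 ≤ K ∧ ∀ x ∈ s, dist (f x) (f x₀) ≤ ε + K * dist x x₀ := by
  obtain ⟨δ, hδ, hnear⟩ := Metric.continuousWithinAt_iff.1 (hf x₀ hx₀) ε hε
  obtain ⟨C, hC⟩ := (hs.image_of_continuousOn hf).isBounded.subset_closedBall (f x₀)
  refine ⟨max C 0 / δ, by positivity, fun x hx => ?_⟩
  have hK : 0 ≤ max C 0 / δ * dist x x₀ := by positivity
  by_cases hxδ : dist x x₀ < δ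
  · linarith [hnear hx hxδ]
  · calc dist (f x) (f x₀) ≤ max C 0 := (hC ⟨x, hx, rfl⟩).trans (le_max_left _ _)
      _ ≤ max C 0 / δ * dist x x₀ := by
        rw [div_mul_eq_mul_div, le_div_iff₀ hδ]
        exact mul_le_mul_of_nonneg_left (not_lt.1 hxδ) (le_max_right _ _)
      _ ≤ ε + max C 0 / δ * dist x x₀ := by linarith

lemma tendstoUniformlyOn_iterate_BopE {n α : ℝ} (hα : -1 < α) (hn : 0 < n) {f : ℝ → ℝ}
    (hf : ContinuousOn f (Icc (0:ℝ) 1)) :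
    TendstoUniformlyOn (fun (m : ℕ) (x : ℝ) => (BopE n α (-1))^[m] f x)
      (fun _ => f 1) atTop (Icc (0:ℝ) 1) := by
  have hr : 0 ≤ n / (n + α + 1) := div_nonneg hn.le (by linarith)
  have hr1 : n / (n + α + 1) < 1 := by rw [div_lt_one (by linarith)]; linarith
  have hfm : AEStronglyMeasurable f (volume.restrict (Ioc 0 1)) :=
    (hf.mono Ioc_subset_Icc_self).aestronglyMeasurable measurableSet_Ioc
  rw [Metric.tendstoUniformlyOn_iff]
  intro ε hε
  obtain ⟨K, hK, hfK⟩ :=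
    exists_dist_le_add_mul_dist isCompact_Icc hf (right_mem_Icc.2 zero_le_one) (half_pos hε)
  have hbd : ∀ t ∈ Icc (0:ℝ) 1, |f t - f 1| ≤ ε / 2 + K * (1 - t) := fun t ht => by
    simpa [Real.dist_eq, abs_of_nonpos (sub_nonpos.2 ht.2)] using hfK t ht
  have hdecay : Tendsto (fun m : ℕ => K * (n / (n + α + 1)) ^ m) atTop (nhds 0) := by
    simpa using (tendsto_pow_atTop_nhds_zero_of_lt_one hr hr1).const_mul K
  filter_upwards [hdecay.eventually_lt_const (half_pos hε)] with m hm x hx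
  have hKr : 0 ≤ K * (n / (n + α + 1)) ^ m := by positivity
  rw [dist_comm, Real.dist_eq]
  nlinarith [abs_iterate_BopE_sub_le hα hn hfm hbd m x hx, hx.1]

lemma BopE_sq {n α x : ℝ} (hα : -1 < α) (hn : 0 < n) (hx : x ∈ Ico (0:ℝ) 1) :
    BopE n α (-1) (fun t => t ^ 2) x
      = (n * x + α + 1) * (n * x + α + 2) / ((n + α + 1) * (n + α + 2)) := by
  rw [BopE_of_ne_one (by linarith) hx.2.ne, Bop_eq_betaAverage,
    betaAverage_sq (by nlinarith [hx.1]) (by nlinarith [hx.2])]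
  ring_nf

lemma sq_lt_BopE_sq {n α x : ℝ} (hα : -1 < α) (hn : 0 < n) (hx : x ∈ Ico (0:ℝ) 1) :
    x ^ 2 < BopE n α (-1) (fun t => t ^ 2) x := by
  rw [BopE_sq hα hn hx, lt_div_iff₀ (mul_pos (by linarith) (by linarith))]
  calc x ^ 2 * ((n + α + 1) * (n + α + 2)) = (x * (n + α + 1)) * (x * (n + α + 2)) := by ring
    _ < (n * x + α + 1) * (n * x + α + 2) := by
      apply mul_lt_mul'' <;> nlinarith [hx.1, hx.2]

theorem iterates_alpha_minus_one (α : ℝ) (hα : α > -1) (n : ℕ) (hn : 1 ≤ n) :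
    (∀ x ∈ Set.Ico (0:ℝ) 1,
      BopE n α (-1) (fun t => t ^ 2) x =
          (n * x + α + 1) * (n * x + α + 2) / ((n + α + 1) * (n + α + 2)) ∧
        x ^ 2 < BopE n α (-1) (fun t => t ^ 2) x) ∧
    ∀ f : ℝ → ℝ, ContinuousOn f (Set.Icc (0:ℝ) 1) →
      TendstoUniformlyOn (fun (m : ℕ) (x : ℝ) => (BopE n α (-1))^[m] f x)
        (fun _ => f 1) atTop (Set.Icc (0:ℝ) 1) := by
  have hn' : (0:ℝ) < n := by exact_mod_cast hn
  exact ⟨fun x hx => ⟨BopE_sq hα hn' hx, sq_lt_BopE_sq hα hn' hx⟩,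
    fun f hf => tendstoUniformlyOn_iterate_BopE hα hn' hf⟩
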